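/- arXiv:2408.15596 — 3 statements merged into one kernel-verified Lean document; each statement's English description precedes it below -/
import Mathlib

section
/- Let h₁, …, h_n : (A,κ) → (B,λ) and β₁, …, β_n : (C,ω) → (A,κ) be digitally continuous maps such that β_i ≃ β_{i+1} (digitally (ω,κ)-homotopic) for every i ∈ {1,…,n−1}. Then D_m(h₁∘β₁, …, h_n∘β_n) ≤ D_m(h₁,…,h_n). -/
/-! Pull a cover `A = X₀ ∪ ⋯ ∪ X_q` back along `β₁`. For `φ : P → β₁⁻¹(X_j)`, the hypothesis on
`X_j` gives `h_i ∘ β₁ ∘ φ ≃ h_{i+1} ∘ β₁ ∘ φ`, and composing the homotopies `β_i ≃ β₁` with the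
continuous `h_i` turns this into `h_i ∘ β_i ∘ φ ≃ h_{i+1} ∘ β_{i+1} ∘ φ`. -/

namespace DigitalTop

/-- The `c_p`-adjacency relation on `ℤ^r`: distinct points such that at most `p`
coordinates differ by exactly `1`, and all coordinates not differing by `1` are equal. -/
def cAdj (r p : ℕ) (a a' : Fin r → ℤ) : Prop :=
  a ≠ a' ∧
  ((Finset.univ.filter fun q : Fin r => |a q - a' q| = 1).card ≤ p) ∧
  ∀ s : Fin r, |a s - a' s| ≠ 1 → a s = a' s

/-- The `2`-adjacency on the digital interval in `ℤ`. -/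
def intAdj (t t' : ℤ) : Prop := |t - t'| = 1

/-- Digital `(adjA, adjB)`-continuity of `f` on `A`, mapping into `B`. -/
def DigContinuousOn {α β : Type*} (adjA : α → α → Prop) (adjB : β → β → Prop)
    (A : Set α) (B : Set β) (f : α → β) : Prop :=
  (∀ a ∈ A, f a ∈ B) ∧
  ∀ a ∈ A, ∀ a' ∈ A, adjA a a' → f a = f a' ∨ adjB (f a) (f a')

/-- `K : A × [0,z]_ℤ → B` is a digital homotopy (in `z` steps): each stage
`K (·, t)` is digitally continuous and each track `K (a, ·)` is digitally
`(2, adjB)`-continuous on `[0,z]_ℤ`. -/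
def IsDigHomotopy {α β : Type*} (adjA : α → α → Prop) (adjB : β → β → Prop)
    (A : Set α) (B : Set β) (z : ℕ) (K : α → ℤ → β) : Prop :=
  (∀ t ∈ Set.Icc (0 : ℤ) (z : ℤ), DigContinuousOn adjA adjB A B fun a => K a t) ∧
  ∀ a ∈ A, ∀ t ∈ Set.Icc (0 : ℤ) (z : ℤ), ∀ t' ∈ Set.Icc (0 : ℤ) (z : ℤ),
    intAdj t t' → K a t = K a t' ∨ adjB (K a t) (K a t')

/-- `h` and `k` are digitally `(adjA, adjB)`-homotopic on `A` (into `B`). -/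
def DigHomotopic {α β : Type*} (adjA : α → α → Prop) (adjB : β → β → Prop)
    (A : Set α) (B : Set β) (h k : α → β) : Prop :=
  ∃ (z : ℕ) (K : α → ℤ → β),
    IsDigHomotopy adjA adjB A B z K ∧
    (∀ a ∈ A, K a 0 = h a) ∧ (∀ a ∈ A, K a (z : ℤ) = k a)

/-- `(A, adjA)` is digitally connected: any two points of `A` are joined by a
digital path in `A` whose consecutive points are equal or adjacent. -/
def DigConnected {α : Type*} (adjA : α → α → Prop) (A : Set α) : Prop :=
  ∀ a ∈ A, ∀ b ∈ A, ∃ (n : ℕ) (f : ℕ → α),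
    f 0 = a ∧ f n = b ∧ (∀ i ≤ n, f i ∈ A) ∧
    ∀ i < n, f i = f (i + 1) ∨ adjA (f i) (f (i + 1))

/-- `adj ≥_d adj'`: `adj` dominates `adj'`. -/
def Dominates {α : Type*} (adj adj' : α → α → Prop) : Prop :=
  ∀ a a', adj a a' → adj' a a'

/-- The normal (strong) product adjacency `NP(adjA, adjB)` on a product. -/
def NP {α β : Type*} (adjA : α → α → Prop) (adjB : β → β → Prop) :
    α × β → α × β → Prop :=
  fun x y => x ≠ y ∧ (x.1 = y.1 ∨ adjA x.1 y.1) ∧ (x.2 = y.2 ∨ adjB x.2 y.2)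

/-- The normal (strong) product adjacency `NP_n(adjB, …, adjB)` on `Bⁿ`. -/
def NPn {β : Type*} (adjB : β → β → Prop) (n : ℕ) :
    (Fin n → β) → (Fin n → β) → Prop :=
  fun x y => x ≠ y ∧ ∀ i, x i = y i ∨ adjB (x i) (y i)

/-- `X` satisfies the digital `m`-homotopic-distance condition for `h, k`: every
digitally continuous map `φ` from every `m`-dimensional digital complex `(P, c_δ)`
into `X` satisfies `h ∘ φ ≃ k ∘ φ`. -/
def DmAt {α β : Type*} (m : ℕ) (adjA : α → α → Prop) (adjB : β → β → Prop)
    (X : Set α) (B : Set β) (h k : α → β) : Prop :=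
  ∀ P : Set (Fin m → ℤ), P.Finite →
    ∀ δ : ℕ, 1 ≤ δ → δ ≤ m →
      ∀ φ : (Fin m → ℤ) → α,
        DigContinuousOn (cAdj m δ) adjA P X φ →
        DigHomotopic (cAdj m δ) adjB P B (h ∘ φ) (k ∘ φ)

/-- The digital `m`-homotopic distance `D_m(h, k)` (an element of `ℕ∞`,
`⊤` if no finite decomposition exists). -/
noncomputable def Dm {α β : Type*} (m : ℕ) (adjA : α → α → Prop) (adjB : β → β → Prop)
    (A : Set α) (B : Set β) (h k : α → β) : ℕ∞ :=
  sInf {n : ℕ∞ | ∃ q : ℕ, n = (q : ℕ∞) ∧ ∃ X : Fin (q + 1) → Set α,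
    A = ⋃ j, X j ∧ ∀ j, DmAt m adjA adjB (X j) B h k}

/-- The digital homotopic distance `D(h, k)`. -/
noncomputable def Ddist {α β : Type*} (adjA : α → α → Prop) (adjB : β → β → Prop)
    (A : Set α) (B : Set β) (h k : α → β) : ℕ∞ :=
  sInf {n : ℕ∞ | ∃ q : ℕ, n = (q : ℕ∞) ∧ ∃ X : Fin (q + 1) → Set α,
    A = ⋃ j, X j ∧ ∀ j, DigHomotopic adjA adjB (X j) B h k}

/-- `X` satisfies the digital higher `m`-homotopic-distance condition for
`h₁, …, h_n`: pushed forward along any `φ` from an `m`-dimensional digital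
complex into `X`, consecutive maps become digitally homotopic. -/
def DmAtH {α β : Type*} (m : ℕ) (adjA : α → α → Prop) (adjB : β → β → Prop)
    (X : Set α) (B : Set β) {n : ℕ} (h : Fin n → α → β) : Prop :=
  ∀ P : Set (Fin m → ℤ), P.Finite →
    ∀ δ : ℕ, 1 ≤ δ → δ ≤ m →
      ∀ φ : (Fin m → ℤ) → α,
        DigContinuousOn (cAdj m δ) adjA P X φ →
        ∀ i : Fin n, ∀ hi : (i : ℕ) + 1 < n,
          DigHomotopic (cAdj m δ) adjB P B (h i ∘ φ) (h ⟨(i : ℕ) + 1, hi⟩ ∘ φ)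

/-- The digital higher `m`-homotopic distance `D_m(h₁, …, h_n)`. -/
noncomputable def DmH {α β : Type*} (m : ℕ) (adjA : α → α → Prop) (adjB : β → β → Prop)
    (A : Set α) (B : Set β) {n : ℕ} (h : Fin n → α → β) : ℕ∞ :=
  sInf {k : ℕ∞ | ∃ q : ℕ, k = (q : ℕ∞) ∧ ∃ X : Fin (q + 1) → Set α,
    A = ⋃ j, X j ∧ ∀ j, DmAtH m adjA adjB (X j) B h}

/-- The digital higher homotopic distance `D(h₁, …, h_n)`. -/
noncomputable def DdistH {α β : Type*} (adjA : α → α → Prop) (adjB : β → β → Prop)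
    (A : Set α) (B : Set β) {n : ℕ} (h : Fin n → α → β) : ℕ∞ :=
  sInf {k : ℕ∞ | ∃ q : ℕ, k = (q : ℕ∞) ∧ ∃ X : Fin (q + 1) → Set α,
    A = ⋃ j, X j ∧ ∀ j, ∀ i : Fin n, ∀ hi : (i : ℕ) + 1 < n,
      DigHomotopic adjA adjB (X j) B (h i) (h ⟨(i : ℕ) + 1, hi⟩)}

/-- `X` satisfies the digital `m`-LS-category condition in `A`: for every `φ` from an
`m`-dimensional digital complex into `X`, the composite with the inclusion
`X ↪ A` is digitally nullhomotopic in `A`. -/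
def CatmAt {α : Type*} (m : ℕ) (adjA : α → α → Prop) (X A : Set α) : Prop :=
  ∀ P : Set (Fin m → ℤ), P.Finite →
    ∀ δ : ℕ, 1 ≤ δ → δ ≤ m →
      ∀ φ : (Fin m → ℤ) → α,
        DigContinuousOn (cAdj m δ) adjA P X φ →
        ∃ a₀ ∈ A, DigHomotopic (cAdj m δ) adjA P A φ (fun _ => a₀)

/-- The digital `m`-Lusternik–Schnirelmann category `cat_m(A, adjA)`. -/
noncomputable def Catm {α : Type*} (m : ℕ) (adjA : α → α → Prop) (A : Set α) : ℕ∞ :=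
  sInf {n : ℕ∞ | ∃ q : ℕ, n = (q : ℕ∞) ∧ ∃ X : Fin (q + 1) → Set α,
    A = ⋃ j, X j ∧ ∀ j, CatmAt m adjA (X j) A}

/-- `X` satisfies the digital `m`-LS-category condition for the map `h`. -/
def CatmMapAt {α β : Type*} (m : ℕ) (adjA : α → α → Prop) (adjB : β → β → Prop)
    (X : Set α) (B : Set β) (h : α → β) : Prop :=
  ∀ P : Set (Fin m → ℤ), P.Finite →
    ∀ δ : ℕ, 1 ≤ δ → δ ≤ m →
      ∀ φ : (Fin m → ℤ) → α,
        DigContinuousOn (cAdj m δ) adjA P X φ →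
        ∃ b₀ ∈ B, DigHomotopic (cAdj m δ) adjB P B (h ∘ φ) (fun _ => b₀)

/-- The digital `m`-Lusternik–Schnirelmann category `cat_m(h; adjA, adjB)` of a map. -/
noncomputable def CatmMap {α β : Type*} (m : ℕ) (adjA : α → α → Prop) (adjB : β → β → Prop)
    (A : Set α) (B : Set β) (h : α → β) : ℕ∞ :=
  sInf {n : ℕ∞ | ∃ q : ℕ, n = (q : ℕ∞) ∧ ∃ X : Fin (q + 1) → Set α,
    A = ⋃ j, X j ∧ ∀ j, CatmMapAt m adjA adjB (X j) B h}

/-- The digital path space `A^{[0,z]_ℤ}`: digitally `(2, adjA)`-continuous maps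
`[0,z]_ℤ → A`. -/
def PathSpace {α : Type*} (adjA : α → α → Prop) (A : Set α) (z : ℕ) : Set (ℤ → α) :=
  {ϑ | DigContinuousOn intAdj adjA (Set.Icc (0 : ℤ) (z : ℤ)) A ϑ}

/-- The adjacency on the digital path space `A^{[0,z]_ℤ}`. -/
def pathAdj {α : Type*} (adjA : α → α → Prop) (z : ℕ) : (ℤ → α) → (ℤ → α) → Prop :=
  fun ϑ θ => ∀ t ∈ Set.Icc (0 : ℤ) (z : ℤ), ∀ t' ∈ Set.Icc (0 : ℤ) (z : ℤ),
    (t = t' ∨ intAdj t t') → ϑ t = θ t' ∨ adjA (ϑ t) (θ t')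

/-- The digital `m`-topological complexity `TC^m(A, adjA)`: the least `q` such
that `A × A = X_0 ∪ ⋯ ∪ X_q` where each `X_j` carries a digitally continuous
`s_j : X_j → A^{[0,z]_ℤ}` with `π ∘ s_j ∘ φ ≃ φ` for every digitally continuous
`φ : P → X_j` from every `m`-dimensional digital complex `(P, c_δ)`. -/
noncomputable def TCm {α : Type*} (m : ℕ) (adjA : α → α → Prop) (A : Set α) : ℕ∞ :=
  sInf {n : ℕ∞ | ∃ q : ℕ, n = (q : ℕ∞) ∧ ∃ X : Fin (q + 1) → Set (α × α),
    (A ×ˢ A) = ⋃ j, X j ∧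
    ∀ j, ∃ (z : ℕ) (s : α × α → ℤ → α),
      DigContinuousOn (NP adjA adjA) (pathAdj adjA z) (X j) (PathSpace adjA A z) s ∧
      ∀ P : Set (Fin m → ℤ), P.Finite →
        ∀ δ : ℕ, 1 ≤ δ → δ ≤ m →
          ∀ φ : (Fin m → ℤ) → α × α,
            DigContinuousOn (cAdj m δ) (NP adjA adjA) P (X j) φ →
            DigHomotopic (cAdj m δ) (NP adjA adjA) P (A ×ˢ A)
              (fun x => (s (φ x) 0, s (φ x) (z : ℤ))) φ}

/-- The digital `m`-topological complexity `TC^m(h; adjA, adjB)` of a map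
`h : (A, adjA) → (B, adjB)`, using `π_h(ϑ) = (ϑ(0), h(ϑ(z)))`. -/
noncomputable def TCmMap {α β : Type*} (m : ℕ) (adjA : α → α → Prop) (adjB : β → β → Prop)
    (A : Set α) (B : Set β) (h : α → β) : ℕ∞ :=
  sInf {n : ℕ∞ | ∃ q : ℕ, n = (q : ℕ∞) ∧ ∃ X : Fin (q + 1) → Set (α × β),
    (A ×ˢ B) = ⋃ j, X j ∧
    ∀ j, ∃ (z : ℕ) (s : α × β → ℤ → α),
      DigContinuousOn (NP adjA adjB) (pathAdj adjA z) (X j) (PathSpace adjA A z) s ∧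
      ∀ P : Set (Fin m → ℤ), P.Finite →
        ∀ δ : ℕ, 1 ≤ δ → δ ≤ m →
          ∀ φ : (Fin m → ℤ) → α × β,
            DigContinuousOn (cAdj m δ) (NP adjA adjB) P (X j) φ →
            DigHomotopic (cAdj m δ) (NP adjA adjB) P (A ×ˢ B)
              (fun x => (s (φ x) 0, h (s (φ x) (z : ℤ)))) φ}

/-- A digital fibration: a digitally continuous map with the digital homotopy
lifting property with respect to every digital image `(B, c_δ) ⊆ ℤ^d`. -/
def DigitalFibration {r r' : ℕ} (p p' : ℕ) (A : Set (Fin r → ℤ)) (A' : Set (Fin r' → ℤ))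
    (h : (Fin r → ℤ) → (Fin r' → ℤ)) : Prop :=
  DigContinuousOn (cAdj r p) (cAdj r' p') A A' h ∧
  ∀ (d : ℕ) (B : Set (Fin d → ℤ)) (δ : ℕ), 1 ≤ δ → δ ≤ d →
    ∀ k : (Fin d → ℤ) → (Fin r → ℤ),
      DigContinuousOn (cAdj d δ) (cAdj r p) B A k →
      ∀ (z : ℕ) (K : (Fin d → ℤ) → ℤ → (Fin r' → ℤ)),
        IsDigHomotopy (cAdj d δ) (cAdj r' p') B A' z K →
        (∀ b ∈ B, K b 0 = h (k b)) →
        ∃ K' : (Fin d → ℤ) → ℤ → (Fin r → ℤ),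
          IsDigHomotopy (cAdj d δ) (cAdj r p) B A z K' ∧
          (∀ b ∈ B, ∀ t ∈ Set.Icc (0 : ℤ) (z : ℤ), h (K' b t) = K b t) ∧
          (∀ b ∈ B, K' b 0 = k b)

/-- A digital homotopy equivalence `ω : (A, adjA) → (B, adjB)`. -/
def DigHomotopyEquiv {α β : Type*} (adjA : α → α → Prop) (adjB : β → β → Prop)
    (A : Set α) (B : Set β) (ω : α → β) : Prop :=
  DigContinuousOn adjA adjB A B ω ∧
  ∃ ω' : β → α, DigContinuousOn adjB adjA B A ω' ∧
    DigHomotopic adjA adjA A A (ω' ∘ ω) id ∧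
    DigHomotopic adjB adjB B B (ω ∘ ω') id

section Homotopy

variable {α β γ : Type*} {adjA : α → α → Prop} {adjB : β → β → Prop} {adjC : γ → γ → Prop}
  {A : Set α} {B : Set β} {C : Set γ}

theorem DigContinuousOn.comp {g : β → γ} {f : α → β}
    (hg : DigContinuousOn adjB adjC B C g) (hf : DigContinuousOn adjA adjB A B f) :
    DigContinuousOn adjA adjC A C (g ∘ f) := by
  refine ⟨fun a ha => hg.1 _ (hf.1 a ha), fun a ha a' ha' hadj => ?_⟩
  rcases hf.2 a ha a' ha' hadj with heq | hadj'
  · exact Or.inl (congrArg g heq)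
  · exact hg.2 _ (hf.1 a ha) _ (hf.1 a' ha') hadj'

theorem DigHomotopic.refl {f : α → β} (hf : DigContinuousOn adjA adjB A B f) :
    DigHomotopic adjA adjB A B f f :=
  ⟨0, fun a _ => f a, ⟨fun _ _ => hf, fun _ _ _ _ _ _ _ => Or.inl rfl⟩,
    fun _ _ => rfl, fun _ _ => rfl⟩

theorem DigHomotopic.symm {f g : α → β} (hfg : DigHomotopic adjA adjB A B f g) :
    DigHomotopic adjA adjB A B g f := by
  obtain ⟨z, K, ⟨hstage, htrack⟩, h0, hz⟩ := hfg
  refine ⟨z, fun a t => K a (z - t), ⟨fun t ht => ?_, fun a ha t ht t' ht' hadj => ?_⟩,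
    fun a ha => by simpa using hz a ha, fun a ha => by simpa using h0 a ha⟩
  · exact hstage (z - t) ⟨by linarith [ht.2], by linarith [ht.1]⟩
  · refine htrack a ha (z - t) ⟨by linarith [ht.2], by linarith [ht.1]⟩
      (z - t') ⟨by linarith [ht'.2], by linarith [ht'.1]⟩ ?_
    rwa [intAdj, sub_sub_sub_cancel_left, abs_sub_comm]

theorem DigHomotopic.trans {f g k : α → β}
    (hfg : DigHomotopic adjA adjB A B f g) (hgk : DigHomotopic adjA adjB A B g k) :
    DigHomotopic adjA adjB A B f k := by
  obtain ⟨z₁, K₁, ⟨hstage₁, htrack₁⟩, h0₁, hz₁⟩ := hfg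
  obtain ⟨z₂, K₂, ⟨hstage₂, htrack₂⟩, h0₂, hz₂⟩ := hgk
  set K : α → ℤ → β := fun a t => if t ≤ z₁ then K₁ a t else K₂ a (t - z₁)
  have hK₁ : ∀ a ∈ A, ∀ t ≤ (z₁ : ℤ), K a t = K₁ a t := fun a _ t ht => if_pos ht
  -- Both descriptions of `K` hold at `t = z₁`, so two adjacent times always share one of them.
  have hK₂ : ∀ a ∈ A, ∀ t, (z₁ : ℤ) ≤ t → K a t = K₂ a (t - z₁) := by
    intro a ha t ht
    by_cases ht' : t ≤ z₁
    · obtain rfl : t = z₁ := le_antisymm ht' ht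
      rw [hK₁ a ha _ ht', hz₁ a ha, sub_self, h0₂ a ha]
    · exact if_neg ht'
  refine ⟨z₁ + z₂, K, ⟨fun t ⟨ht₀, ht⟩ => ?_, fun a ha t ⟨ht₀, ht⟩ t' ⟨ht₀', ht'⟩ hadj => ?_⟩,
    fun a ha => ?_, fun a ha => ?_⟩
  · push_cast at ht
    by_cases htz : t ≤ z₁
    · simpa only [K, if_pos htz] using hstage₁ t ⟨ht₀, htz⟩
    · simpa only [K, if_neg htz] using hstage₂ (t - z₁) ⟨by omega, by omega⟩
  · push_cast at ht ht'
    have hside : (t ≤ z₁ ∧ t' ≤ z₁) ∨ ((z₁ : ℤ) ≤ t ∧ (z₁ : ℤ) ≤ t') := by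
      rcases abs_eq (zero_le_one' ℤ) |>.mp hadj with h | h <;> omega
    rcases hside with ⟨hle, hle'⟩ | ⟨hge, hge'⟩
    · rw [hK₁ a ha t hle, hK₁ a ha t' hle']
      exact htrack₁ a ha t ⟨ht₀, hle⟩ t' ⟨ht₀', hle'⟩ hadj
    · rw [hK₂ a ha t hge, hK₂ a ha t' hge']
      refine htrack₂ a ha (t - z₁) ⟨by omega, by omega⟩ (t' - z₁) ⟨by omega, by omega⟩ ?_
      rwa [intAdj, sub_sub_sub_cancel_right]
  · rw [hK₁ a ha 0 (Nat.cast_nonneg z₁), h0₁ a ha]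
  · rw [hK₂ a ha _ (by push_cast; omega), Nat.cast_add, add_sub_cancel_left, hz₂ a ha]

theorem DigHomotopic.comp_left {f g : α → β} {k : β → γ}
    (hk : DigContinuousOn adjB adjC B C k) (hfg : DigHomotopic adjA adjB A B f g) :
    DigHomotopic adjA adjC A C (k ∘ f) (k ∘ g) := by
  obtain ⟨z, K, ⟨hstage, htrack⟩, h0, hz⟩ := hfg
  refine ⟨z, fun a t => k (K a t), ⟨fun t ht => hk.comp (hstage t ht),
    fun a ha t ht t' ht' hadj => ?_⟩, fun a ha => ?_, fun a ha => ?_⟩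
  · rcases htrack a ha t ht t' ht' hadj with heq | hadj'
    · exact Or.inl (congrArg k heq)
    · exact hk.2 _ ((hstage t ht).1 a ha) _ ((hstage t' ht').1 a ha) hadj'
  · simp only [Function.comp_apply, h0 a ha]
  · simp only [Function.comp_apply, hz a ha]

theorem DigHomotopic.comp_right {f g : β → γ} {φ : α → β}
    (hφ : DigContinuousOn adjA adjB A B φ) (hfg : DigHomotopic adjB adjC B C f g) :
    DigHomotopic adjA adjC A C (f ∘ φ) (g ∘ φ) := by
  obtain ⟨z, K, ⟨hstage, htrack⟩, h0, hz⟩ := hfg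
  exact ⟨z, fun a t => K (φ a) t,
    ⟨fun t ht => (hstage t ht).comp hφ, fun a ha => htrack (φ a) (hφ.1 a ha)⟩,
    fun a ha => h0 _ (hφ.1 a ha), fun a ha => hz _ (hφ.1 a ha)⟩

theorem digHomotopic_zero_of_chain {n : ℕ} {f : Fin (n + 1) → α → β}
    (hf₀ : DigContinuousOn adjA adjB A B (f 0))
    (hchain : ∀ i : Fin (n + 1), ∀ hi : (i : ℕ) + 1 < n + 1,
      DigHomotopic adjA adjB A B (f i) (f ⟨(i : ℕ) + 1, hi⟩)) :
    ∀ i, DigHomotopic adjA adjB A B (f 0) (f i) := by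
  refine Fin.induction (DigHomotopic.refl hf₀) fun i hi => hi.trans ?_
  exact hchain i.castSucc (by simp)

end Homotopy

section HigherDistance

variable {α β γ : Type*} {adjA : α → α → Prop} {adjB : β → β → Prop} {adjC : γ → γ → Prop}
  {A : Set α} {B : Set β} {C : Set γ} {m n : ℕ}

theorem dmH_eq_zero_of_le_one (hn : n ≤ 1) (h : Fin n → α → β) :
    DmH m adjA adjB A B h = 0 :=
  nonpos_iff_eq_zero.mp <| sInf_le
    ⟨0, rfl, fun _ => A, (Set.iUnion_const A).symm, fun _ _ _ _ _ _ _ _ i hi => by omega⟩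

theorem DmAtH.comp_of_homotopic {X : Set α} {h : Fin n → α → β} {f : Fin n → γ → α}
    {f₀ : γ → α} (hX : DmAtH m adjA adjB X B h) (hh : ∀ i, DigContinuousOn adjA adjB A B (h i))
    (hf₀ : DigContinuousOn adjC adjA C A f₀) (hf : ∀ i, DigHomotopic adjC adjA C A f₀ (f i)) :
    DmAtH m adjC adjB (C ∩ f₀ ⁻¹' X) B (fun i => h i ∘ f i) := by
  intro P hP δ hδ₁ hδm φ hφ i hi
  have hφC : DigContinuousOn (cAdj m δ) adjC P C φ := ⟨fun x hx => (hφ.1 x hx).1, hφ.2⟩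
  have hf₀φ : DigContinuousOn (cAdj m δ) adjA P X (f₀ ∘ φ) :=
    ⟨fun x hx => (hφ.1 x hx).2, (hf₀.comp hφC).2⟩
  set i' : Fin n := ⟨(i : ℕ) + 1, hi⟩
  have hback : DigHomotopic (cAdj m δ) adjB P B ((h i ∘ f i) ∘ φ) ((h i ∘ f₀) ∘ φ) :=
    ((hf i).symm.comp_left (hh i)).comp_right hφC
  have hforth : DigHomotopic (cAdj m δ) adjB P B ((h i' ∘ f₀) ∘ φ) ((h i' ∘ f i') ∘ φ) :=
    ((hf i').comp_left (hh i')).comp_right hφC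
  exact (hback.trans (hX P hP δ hδ₁ hδm (f₀ ∘ φ) hf₀φ i hi)).trans hforth

theorem dmH_comp_le_of_homotopic {h : Fin n → α → β} {f : Fin n → γ → α} {f₀ : γ → α}
    (hh : ∀ i, DigContinuousOn adjA adjB A B (h i)) (hf₀ : DigContinuousOn adjC adjA C A f₀)
    (hf : ∀ i, DigHomotopic adjC adjA C A f₀ (f i)) :
    DmH m adjC adjB C B (fun i => h i ∘ f i) ≤ DmH m adjA adjB A B h := by
  refine le_sInf ?_
  rintro _ ⟨k, rfl, X, hA, hX⟩
  refine sInf_le ⟨k, rfl, fun j => C ∩ f₀ ⁻¹' X j, ?_, fun j => (hX j).comp_of_homotopic hh hf₀ hf⟩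
  rw [← Set.inter_iUnion, ← Set.preimage_iUnion, ← hA]
  exact (Set.inter_eq_left.mpr hf₀.1).symm

end HigherDistance

theorem dmh_precompose_general {r s u p q w : ℕ} {n : ℕ}
    (A : Set (Fin r → ℤ)) (B : Set (Fin s → ℤ)) (C : Set (Fin u → ℤ))
    (h : Fin n → (Fin r → ℤ) → (Fin s → ℤ))
    (β : Fin n → (Fin u → ℤ) → (Fin r → ℤ))
    (hcont : ∀ i, DigContinuousOn (cAdj r p) (cAdj s q) A B (h i))
    (βcont : ∀ i, DigContinuousOn (cAdj u w) (cAdj r p) C A (β i))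
    (hβ : ∀ i : Fin n, ∀ hi : (i : ℕ) + 1 < n,
      DigHomotopic (cAdj u w) (cAdj r p) C A (β i) (β ⟨(i : ℕ) + 1, hi⟩))
    (m : ℕ) :
    DmH m (cAdj u w) (cAdj s q) C B (fun i => h i ∘ β i)
      ≤ DmH m (cAdj r p) (cAdj s q) A B h := by
  cases n with
  | zero => exact (dmH_eq_zero_of_le_one zero_le_one _).trans_le zero_le
  | succ n =>
    exact dmH_comp_le_of_homotopic hcont (βcont 0) (digHomotopic_zero_of_chain (βcont 0) hβ)

/-- `D_m(h₁∘β₁, …, h_n∘β_n) ≤ D_m(h₁,…,h_n)` provided that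
`β_i ≃ β_{i+1}` for every `i`. -/
theorem dmh_precompose {r s u p q w : ℕ} {n : ℕ}
    (hp1 : 1 ≤ p) (hpr : p ≤ r) (hq1 : 1 ≤ q) (hqs : q ≤ s) (hw1 : 1 ≤ w) (hwu : w ≤ u)
    (A : Set (Fin r → ℤ)) (B : Set (Fin s → ℤ)) (C : Set (Fin u → ℤ))
    (h : Fin n → (Fin r → ℤ) → (Fin s → ℤ))
    (β : Fin n → (Fin u → ℤ) → (Fin r → ℤ))
    (hcont : ∀ i, DigContinuousOn (cAdj r p) (cAdj s q) A B (h i))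
    (βcont : ∀ i, DigContinuousOn (cAdj u w) (cAdj r p) C A (β i))
    (hβ : ∀ i : Fin n, ∀ hi : (i : ℕ) + 1 < n,
      DigHomotopic (cAdj u w) (cAdj r p) C A (β i) (β ⟨(i : ℕ) + 1, hi⟩))
    (m : ℕ) (hm : 0 < m) :
    DmH m (cAdj u w) (cAdj s q) C B (fun i => h i ∘ β i)
      ≤ DmH m (cAdj r p) (cAdj s q) A B h :=
  dmh_precompose_general A B C h β hcont βcont hβ m

end DigitalTop
end

section
/- Let h₁, …, h_n : (A,κ) → (B,λ) be digitally (κ,λ)-continuous maps with (A,κ) and (B,λ) digitally connected, and let n-TC^m(B,λ) := D_m(pr₁,…,pr_n) for the projections pr₁,…,pr_n : (Bⁿ, NP_n(λ,…,λ)) → (B,λ). Then D_m(h₁,…,h_n) ≤ n-TC^m(B,λ). -/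
namespace DigitalTop

/-- `D_m(h₁,…,h_n) ≤ n-TC^m(B,λ)`, where
`n-TC^m(B,λ) = D_m(pr₁,…,pr_n)` for the projections
`pr_i : (Bⁿ, NP_n(λ,…,λ)) → (B,λ)`. -/
theorem dmh_le_ntcm {r s p q : ℕ} {n : ℕ}
    (hp1 : 1 ≤ p) (hpr : p ≤ r) (hq1 : 1 ≤ q) (hqs : q ≤ s)
    (A : Set (Fin r → ℤ)) (B : Set (Fin s → ℤ))
    (hAconn : DigConnected (cAdj r p) A) (hBconn : DigConnected (cAdj s q) B)
    (h : Fin n → (Fin r → ℤ) → (Fin s → ℤ))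
    (hcont : ∀ i, DigContinuousOn (cAdj r p) (cAdj s q) A B (h i))
    (m : ℕ) (hm : 0 < m) :
    DmH m (cAdj r p) (cAdj s q) A B h
      ≤ DmH m (NPn (cAdj s q) n) (cAdj s q)
          {x : Fin n → Fin s → ℤ | ∀ i, x i ∈ B} B (fun i x => x i) := by
  apply sInf_le_sInf
  rintro k ⟨Q, rfl, X, hcover, hX⟩
  refine ⟨Q, rfl, fun j => (fun a => (fun i => h i a)) ⁻¹' (X j) ∩ A, ?_, ?_⟩
  · ext a
    constructor
    · intro ha
      have hmem : (fun i => h i a) ∈ ⋃ j, X j := by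
        rw [← hcover]; exact fun i => (hcont i).1 a ha
      obtain ⟨j, hj⟩ := Set.mem_iUnion.1 hmem
      exact Set.mem_iUnion.2 ⟨j, hj, ha⟩
    · intro hmem
      obtain ⟨j, hj⟩ := Set.mem_iUnion.1 hmem
      exact hj.2
  · intro j P hP δ hδ1 hδm φ hφ i hi
    have key := hX j P hP δ hδ1 hδm (fun x => fun i' => h i' (φ x)) ?_ i hi
    · exact key
    · constructor
      · intro a ha; exact (hφ.1 a ha).1
      · intro a ha a' ha' hadj
        rcases hφ.2 a ha a' ha' hadj with heq | hadj'
        · exact Or.inl (congrArg (fun v i' => h i' v) heq)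
        · by_cases hEq : (fun i' => h i' (φ a)) = (fun i' => h i' (φ a'))
          · exact Or.inl hEq
          · refine Or.inr ⟨hEq, fun i' => ?_⟩
            exact (hcont i').2 (φ a) (hφ.1 a ha).2 (φ a') (hφ.1 a' ha').2 hadj'

end DigitalTop
end

section
/- For each i ∈ {1,…,n}, let h_i : (A,κ) → (B,λ) and k_i : (A',κ') → (B',λ') be digitally continuous maps, and let ω₁ : (B,λ) → (B',λ') and ω₂ : (A',κ') → (A,κ) be digital homotopy equivalences such that ω₁∘h_i∘ω₂ ≃ k_i digitally (κ',λ')-homotopically for each i. Then D_m(h₁,…,h_n) = D_m(k₁,…,k_n). -/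
namespace DigitalTop

lemma digHomotopic_symm {α β : Type*} {adjA : α → α → Prop} {adjB : β → β → Prop}
    {A : Set α} {B : Set β} {f g : α → β}
    (H : DigHomotopic adjA adjB A B f g) : DigHomotopic adjA adjB A B g f := by
  obtain ⟨z, K, ⟨hs, htk⟩, h0, hz⟩ := H
  refine ⟨z, fun a t => K a ((z : ℤ) - t), ⟨?_, ?_⟩, ?_, ?_⟩
  · intro t ht
    obtain ⟨ht1, ht2⟩ := ht
    exact hs ((z : ℤ) - t) ⟨by omega, by omega⟩
  · intro a ha t ht t' ht' hadj
    obtain ⟨ht1, ht2⟩ := ht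
    obtain ⟨ht1', ht2'⟩ := ht'
    refine htk a ha ((z : ℤ) - t) ⟨by omega, by omega⟩ ((z : ℤ) - t') ⟨by omega, by omega⟩ ?_
    show |(z : ℤ) - t - ((z : ℤ) - t')| = 1
    rw [show (z : ℤ) - t - ((z : ℤ) - t') = -(t - t') by ring, abs_neg]
    exact hadj
  · intro a ha
    simpa using hz a ha
  · intro a ha
    simpa using h0 a ha

lemma digHomotopic_trans {α β : Type*} {adjA : α → α → Prop} {adjB : β → β → Prop}
    {A : Set α} {B : Set β} {f g k : α → β}
    (H1 : DigHomotopic adjA adjB A B f g) (H2 : DigHomotopic adjA adjB A B g k) :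
    DigHomotopic adjA adjB A B f k := by
  obtain ⟨z₁, K₁, ⟨hs₁, htk₁⟩, h10, h1z⟩ := H1
  obtain ⟨z₂, K₂, ⟨hs₂, htk₂⟩, h20, h2z⟩ := H2
  refine ⟨z₁ + z₂, fun a t => if t ≤ (z₁ : ℤ) then K₁ a t else K₂ a (t - z₁), ⟨?_, ?_⟩, ?_, ?_⟩
  · intro t ht
    obtain ⟨ht1, ht2⟩ := ht
    have hcast : ((z₁ + z₂ : ℕ) : ℤ) = (z₁ : ℤ) + z₂ := by push_cast; ring
    rw [hcast] at ht2
    by_cases hc : t ≤ (z₁ : ℤ)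
    · have := hs₁ t ⟨ht1, hc⟩
      refine ⟨fun a ha => by simpa [hc] using this.1 a ha, fun a ha a' ha' hadj => by
        simpa [hc] using this.2 a ha a' ha' hadj⟩
    · have := hs₂ (t - z₁) ⟨by omega, by omega⟩
      refine ⟨fun a ha => by simpa [hc] using this.1 a ha, fun a ha a' ha' hadj => by
        simpa [hc] using this.2 a ha a' ha' hadj⟩
  · intro a ha t ht t' ht' hadj
    obtain ⟨ht1, ht2⟩ := ht
    obtain ⟨ht1', ht2'⟩ := ht'
    have hcast : ((z₁ + z₂ : ℕ) : ℤ) = (z₁ : ℤ) + z₂ := by push_cast; ring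
    rw [hcast] at ht2 ht2'
    have habs : t - t' = 1 ∨ t - t' = -1 := by
      rcases (abs_eq (by norm_num : (0:ℤ) ≤ 1)).mp hadj with h | h
      · exact Or.inl h
      · exact Or.inr h
    by_cases hc : t ≤ (z₁ : ℤ) <;> by_cases hc' : t' ≤ (z₁ : ℤ)
    · simpa [hc, hc'] using htk₁ a ha t ⟨ht1, hc⟩ t' ⟨ht1', hc'⟩ hadj
    · -- t ≤ z₁ < t', so t = z₁, t' = z₁ + 1
      have hteq : t = (z₁ : ℤ) := by omega
      have ht'eq : t' - z₁ = 1 := by omega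
      simp only [if_pos hc, if_neg hc']
      rw [hteq, ht'eq, h1z a ha, ← h20 a ha]
      refine htk₂ a ha 0 ⟨le_refl _, by positivity⟩ 1 ⟨by omega, by omega⟩ ?_
      show |(0 : ℤ) - 1| = 1
      norm_num
    · have hteq : t - z₁ = 1 := by omega
      have ht'eq : t' = (z₁ : ℤ) := by omega
      simp only [if_neg hc, if_pos hc']
      rw [hteq, ht'eq, h1z a ha, ← h20 a ha]
      refine htk₂ a ha 1 ⟨by omega, by omega⟩ 0 ⟨le_refl _, by positivity⟩ ?_
      show |(1 : ℤ) - 0| = 1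
      norm_num
    · simp only [if_neg hc, if_neg hc']
      refine htk₂ a ha (t - z₁) ⟨by omega, by omega⟩ (t' - z₁) ⟨by omega, by omega⟩ ?_
      show |t - z₁ - (t' - z₁)| = 1
      rw [show t - (z₁ : ℤ) - (t' - z₁) = t - t' by ring]
      exact hadj
  · intro a ha
    simp only [if_pos (by positivity : (0 : ℤ) ≤ (z₁ : ℤ))]
    exact h10 a ha
  · intro a ha
    have hcast : ((z₁ + z₂ : ℕ) : ℤ) = (z₁ : ℤ) + z₂ := by push_cast; ring
    rw [hcast]
    by_cases hc : (z₁ : ℤ) + z₂ ≤ z₁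
    · have hz2 : (z₂ : ℤ) = 0 := by omega
      rw [hz2, add_zero]
      show (if (z₁ : ℤ) ≤ (z₁ : ℤ) then K₁ a z₁ else K₂ a ((z₁ : ℤ) - z₁)) = k a
      rw [if_pos le_rfl, h1z a ha, ← h20 a ha, ← hz2]
      exact h2z a ha
    · simp only [if_neg hc, add_sub_cancel_left]
      exact h2z a ha

lemma digHomotopic_pre {γ α β : Type*} {adjP : γ → γ → Prop} {adjA : α → α → Prop}
    {adjB : β → β → Prop} {P : Set γ} {A : Set α} {B : Set β} {f g : α → β} {φ : γ → α}
    (H : DigHomotopic adjA adjB A B f g)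
    (hφ : DigContinuousOn adjP adjA P A φ) :
    DigHomotopic adjP adjB P B (f ∘ φ) (g ∘ φ) := by
  obtain ⟨z, K, ⟨hs, htk⟩, h0, hz⟩ := H
  refine ⟨z, fun x t => K (φ x) t, ⟨?_, ?_⟩, ?_, ?_⟩
  · intro t ht
    refine ⟨fun x hx => (hs t ht).1 _ (hφ.1 x hx), ?_⟩
    intro x hx x' hx' hadj
    rcases hφ.2 x hx x' hx' hadj with he | ha
    · exact Or.inl (by show K (φ x) t = K (φ x') t; rw [he])
    · exact (hs t ht).2 _ (hφ.1 x hx) _ (hφ.1 x' hx') ha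
  · intro x hx t ht t' ht' hadj
    exact htk _ (hφ.1 x hx) t ht t' ht' hadj
  · intro x hx; exact h0 _ (hφ.1 x hx)
  · intro x hx; exact hz _ (hφ.1 x hx)

lemma digHomotopic_post {α β γ : Type*} {adjA : α → α → Prop} {adjB : β → β → Prop}
    {adjC : γ → γ → Prop} {A : Set α} {B : Set β} {C : Set γ} {f g : α → β} {ω : β → γ}
    (H : DigHomotopic adjA adjB A B f g)
    (hω : DigContinuousOn adjB adjC B C ω) :
    DigHomotopic adjA adjC A C (ω ∘ f) (ω ∘ g) := by
  obtain ⟨z, K, ⟨hs, htk⟩, h0, hz⟩ := H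
  refine ⟨z, fun a t => ω (K a t), ⟨?_, ?_⟩, ?_, ?_⟩
  · intro t ht
    refine ⟨fun a ha => hω.1 _ ((hs t ht).1 a ha), ?_⟩
    intro a ha a' ha' hadj
    rcases (hs t ht).2 a ha a' ha' hadj with he | hb
    · exact Or.inl (by show ω (K a t) = ω (K a' t); rw [show K a t = K a' t from he])
    · exact hω.2 _ ((hs t ht).1 a ha) _ ((hs t ht).1 a' ha') hb
  · intro a ha t ht t' ht' hadj
    rcases htk a ha t ht t' ht' hadj with he | hb
    · exact Or.inl (by show ω (K a t) = ω (K a t'); rw [he])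
    · exact hω.2 _ ((hs t ht).1 a ha) _ ((hs t' ht').1 a ha) hb
  · intro a ha; simp only [Function.comp_apply]; rw [h0 a ha]
  · intro a ha; simp only [Function.comp_apply]; rw [hz a ha]

lemma dmh_transfer {α β α' β' : Type*} (m : ℕ)
    (adjA : α → α → Prop) (adjB : β → β → Prop)
    (adjA' : α' → α' → Prop) (adjB' : β' → β' → Prop)
    (A : Set α) (B : Set β) (A' : Set α') (B' : Set β')
    {n : ℕ} (h : Fin n → α → β) (k : Fin n → α' → β')
    (ω₁ : β → β') (ω₂ : α' → α)
    (hω₁ : DigContinuousOn adjB adjB' B B' ω₁)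
    (hω₂ : DigContinuousOn adjA' adjA A' A ω₂)
    (hcomm : ∀ i, DigHomotopic adjA' adjB' A' B' (ω₁ ∘ h i ∘ ω₂) (k i)) :
    DmH m adjA' adjB' A' B' k ≤ DmH m adjA adjB A B h := by
  apply sInf_le_sInf
  rintro x ⟨q, rfl, X, hcover, hX⟩
  refine ⟨q, rfl, fun j => A' ∩ ω₂ ⁻¹' (X j), ?_, ?_⟩
  · ext a
    simp only [Set.mem_iUnion, Set.mem_inter_iff, Set.mem_preimage]
    constructor
    · intro ha
      have : ω₂ a ∈ A := hω₂.1 a ha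
      rw [hcover] at this
      obtain ⟨j, hj⟩ := Set.mem_iUnion.mp this
      exact ⟨j, ha, hj⟩
    · rintro ⟨j, ha, _⟩; exact ha
  · intro j P hP δ hδ1 hδm φ hφ i hi
    have hφA' : DigContinuousOn (cAdj m δ) adjA' P A' φ :=
      ⟨fun x hx => (hφ.1 x hx).1, hφ.2⟩
    have hψ : DigContinuousOn (cAdj m δ) adjA P (X j) (ω₂ ∘ φ) := by
      refine ⟨fun x hx => (hφ.1 x hx).2, ?_⟩
      intro x hx x' hx' hadj
      rcases hφ.2 x hx x' hx' hadj with he | ha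
      · exact Or.inl (by simp only [Function.comp_apply]; rw [he])
      · exact hω₂.2 _ (hφA'.1 x hx) _ (hφA'.1 x' hx') ha
    have hHom := hX j P hP δ hδ1 hδm (ω₂ ∘ φ) hψ i hi
    have hpost := digHomotopic_post hHom hω₁
    have hpre₁ := digHomotopic_pre (hcomm i) hφA'
    have hpre₂ := digHomotopic_pre (hcomm ⟨(i : ℕ) + 1, hi⟩) hφA'
    exact digHomotopic_trans (digHomotopic_symm hpre₁) (digHomotopic_trans hpost hpre₂)

/-- If `ω₁ : (B,λ) → (B',λ')` and `ω₂ : (A',κ') → (A,κ)` are digital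
homotopy equivalences with `ω₁∘h_i∘ω₂ ≃ k_i` for each `i`, then
`D_m(h₁,…,h_n) = D_m(k₁,…,k_n)`. -/
theorem dmh_homotopy_equiv_invariant {r s r' s' p q p' q' : ℕ} {n : ℕ}
    (hp1 : 1 ≤ p) (hpr : p ≤ r) (hq1 : 1 ≤ q) (hqs : q ≤ s)
    (hp1' : 1 ≤ p') (hpr' : p' ≤ r') (hq1' : 1 ≤ q') (hqs' : q' ≤ s')
    (A : Set (Fin r → ℤ)) (B : Set (Fin s → ℤ))
    (A' : Set (Fin r' → ℤ)) (B' : Set (Fin s' → ℤ))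
    (h : Fin n → (Fin r → ℤ) → (Fin s → ℤ))
    (k : Fin n → (Fin r' → ℤ) → (Fin s' → ℤ))
    (hcont : ∀ i, DigContinuousOn (cAdj r p) (cAdj s q) A B (h i))
    (kcont : ∀ i, DigContinuousOn (cAdj r' p') (cAdj s' q') A' B' (k i))
    (ω₁ : (Fin s → ℤ) → (Fin s' → ℤ)) (ω₂ : (Fin r' → ℤ) → (Fin r → ℤ))
    (hω₁ : DigHomotopyEquiv (cAdj s q) (cAdj s' q') B B' ω₁)
    (hω₂ : DigHomotopyEquiv (cAdj r' p') (cAdj r p) A' A ω₂)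
    (hcomm : ∀ i, DigHomotopic (cAdj r' p') (cAdj s' q') A' B' (ω₁ ∘ h i ∘ ω₂) (k i))
    (m : ℕ) (hm : 0 < m) :
    DmH m (cAdj r p) (cAdj s q) A B h = DmH m (cAdj r' p') (cAdj s' q') A' B' k := by
  obtain ⟨hω₁c, ω₁', hω₁'c, hBB, hB'B'⟩ := hω₁
  obtain ⟨hω₂c, ω₂', hω₂'c, hA'A', hAA⟩ := hω₂
  refine le_antisymm ?_ ?_
  · -- DmH h ≤ DmH k via ω₁', ω₂'
    have hcomm' : ∀ i, DigHomotopic (cAdj r p) (cAdj s q) A B (ω₁' ∘ k i ∘ ω₂') (h i) := by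
      intro i
      have H1 := digHomotopic_post (digHomotopic_pre (hcomm i) hω₂'c) hω₁'c
      have H2 := digHomotopic_post (digHomotopic_post (digHomotopic_post hAA (hcont i)) hω₁c) hω₁'c
      have H3 := digHomotopic_pre hBB (hcont i)
      exact digHomotopic_trans (digHomotopic_symm H1) (digHomotopic_trans H2 H3)
    exact dmh_transfer m (cAdj r' p') (cAdj s' q') (cAdj r p) (cAdj s q) A' B' A B
      k h ω₁' ω₂' hω₁'c hω₂'c hcomm'
  · exact dmh_transfer m (cAdj r p) (cAdj s q) (cAdj r' p') (cAdj s' q') A B A' B'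
      h k ω₁ ω₂ hω₁c hω₂c hcomm


end DigitalTop
end
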